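/- arXiv:2411.10139 — 2 statements merged into one kernel-verified Lean document; each statement's English description precedes it below -/
import Mathlib

section
/- If X and Y are independent real random variables whose distributions both belong to the class D⁻, then the distribution of X + Y belongs to D⁻. -/
open MeasureTheory ProbabilityTheory

section Helpers

variable {n : ℕ}

lemma aux_pi_inter (μ : Measure ℝ) [IsProbabilityMeasure μ]
    (S : Finset (Fin n)) (s : Fin n → Set ℝ) (hs : ∀ i ∈ S, MeasurableSet (s i)) :
    Measure.pi (fun _ : Fin n => μ) (⋂ i ∈ S, (fun v : Fin n → ℝ => v i) ⁻¹' s i)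
      = ∏ i ∈ S, μ (s i) := by
  have hset : (⋂ i ∈ S, (fun v : Fin n → ℝ => v i) ⁻¹' s i)
      = Set.pi Set.univ (fun i => if i ∈ S then s i else Set.univ) := by
    ext v
    simp only [Set.mem_iInter, Set.mem_preimage, Set.mem_pi, Set.mem_univ, true_implies]
    constructor
    · intro h i; split_ifs with hi
      · exact h i hi
      · exact Set.mem_univ _
    · intro h i hi; have := h i; rwa [if_pos hi] at this
  rw [hset, Measure.pi_pi]
  have : ∀ i : Fin n, μ (if i ∈ S then s i else Set.univ) = if i ∈ S then μ (s i) else 1 := by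
    intro i; split_ifs <;> simp
  simp_rw [this]
  rw [Finset.prod_ite_mem, Finset.univ_inter]

lemma aux_eval_law (μ : Measure ℝ) [IsProbabilityMeasure μ] (i : Fin n) :
    Measure.map (fun v : Fin n → ℝ => v i) (Measure.pi fun _ => μ) = μ := by
  ext s hs
  rw [Measure.map_apply (measurable_pi_apply i) hs]
  have := aux_pi_inter μ {i} (fun _ => s) (by simp [hs])
  simpa using this

lemma aux_eval_iIndep (μ : Measure ℝ) [IsProbabilityMeasure μ] :
    iIndepFun (m := fun _ : Fin n => Real.measurableSpace)
      (fun i (v : Fin n → ℝ) => v i) (Measure.pi fun _ => μ) := by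
  rw [iIndepFun_iff_measure_inter_preimage_eq_mul]
  intro S sets hsets
  rw [aux_pi_inter μ S sets hsets]
  refine Finset.prod_congr rfl fun i hi => ?_
  have := aux_pi_inter μ {i} sets (by simpa using hsets i hi)
  simpa using this.symm

lemma aux_vector_law {Ω : Type} [MeasureSpace Ω] [IsProbabilityMeasure (ℙ : Measure Ω)]
    (μ : Measure ℝ) [IsProbabilityMeasure μ] (X : Fin n → Ω → ℝ)
    (hm : ∀ i, Measurable (X i)) (hlaw : ∀ i, Measure.map (X i) ℙ = μ)
    (hind : iIndepFun (m := fun _ => Real.measurableSpace) X ℙ) :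
    Measure.map (fun ω i => X i ω) ℙ = Measure.pi (fun _ => μ) := by
  refine (Measure.pi_eq fun s hs => ?_).symm
  rw [Measure.map_apply (measurable_pi_lambda _ hm) (MeasurableSet.univ_pi hs)]
  have hpre : (fun ω i => X i ω) ⁻¹' (Set.pi Set.univ s) = ⋂ i ∈ Finset.univ, X i ⁻¹' s i := by
    ext ω; simp [Set.mem_pi]
  rw [hpre, hind.measure_inter_preimage_eq_mul Finset.univ (fun i _ => hs i)]
  refine Finset.prod_congr rfl fun i _ => ?_
  rw [← hlaw i, Measure.map_apply (hm i) (hs i)]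

end Helpers

/-- The distribution (probability measure) `μ` on `ℝ` belongs to the class `D⁻` if for every
`n`, all nonnegative weights `θ` summing to one, and i.i.d. random variables `X i` with
distribution `μ`, one has `X 1 ≤_st ∑ i, θ i * X i` in the usual stochastic order, i.e. the
cdf `t ↦ P(∑ i, θ i * X i ≤ t)` of the convex combination is pointwise below the common
cdf `t ↦ μ (Iic t)`. -/
def IsDNeg (μ : Measure ℝ) : Prop :=
  ∀ (n : ℕ) (θ : Fin n → ℝ), (∀ i, 0 ≤ θ i) → ∑ i, θ i = 1 →
    ∀ (Ω : Type) [MeasureSpace Ω], IsProbabilityMeasure (ℙ : Measure Ω) →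
      ∀ X : Fin n → Ω → ℝ, (∀ i, Measurable (X i)) →
        (∀ i, Measure.map (X i) ℙ = μ) →
        iIndepFun (m := fun _ => Real.measurableSpace) X ℙ →
        ∀ t : ℝ, Measure.map (fun ω => ∑ i, θ i * X i ω) ℙ (Set.Iic t) ≤ μ (Set.Iic t)

/-- If `X, Y` are independent real random variables whose distributions belong to `D⁻`,
then the distribution of `X + Y` belongs to `D⁻`. -/
theorem stmt4 (Ω : Type) [MeasureSpace Ω] [IsProbabilityMeasure (ℙ : Measure Ω)]
    (X Y : Ω → ℝ) (hX : Measurable X) (hY : Measurable Y)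
    (hindep : IndepFun X Y ℙ)
    (hXD : IsDNeg (Measure.map X ℙ)) (hYD : IsDNeg (Measure.map Y ℙ)) :
    IsDNeg (Measure.map (fun ω => X ω + Y ω) ℙ) := by
  intro n θ hθ0 hθ1 Ω' mΩ' hP' Z hZm hZlaw hZind t
  set νX := Measure.map X ℙ with hνX
  set νY := Measure.map Y ℙ with hνY
  set μ := Measure.map (fun ω => X ω + Y ω) ℙ with hμ
  haveI : IsProbabilityMeasure νX := Measure.isProbabilityMeasure_map hX.aemeasurable
  haveI : IsProbabilityMeasure νY := Measure.isProbabilityMeasure_map hY.aemeasurable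
  haveI : IsProbabilityMeasure μ := Measure.isProbabilityMeasure_map (hX.add hY).aemeasurable
  -- the sum function on the canonical space
  set S : (Fin n → ℝ) → ℝ := fun v => ∑ i, θ i * v i with hSdef
  have hS : Measurable S :=
    Finset.measurable_sum _ (fun i _ => (measurable_pi_apply i).const_mul _)
  set P1 := Measure.pi (fun _ : Fin n => νX) with hP1
  set P2 := Measure.pi (fun _ : Fin n => νY) with hP2
  haveI : IsProbabilityMeasure P1 := by rw [hP1]; infer_instance
  haveI : IsProbabilityMeasure P2 := by rw [hP2]; infer_instance
  -- Step C : μ as convolution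
  have hC : μ = Measure.map (fun p : ℝ × ℝ => p.1 + p.2) (νX.prod νY) := by
    rw [hνX, hνY,
      ← (indepFun_iff_map_prod_eq_prod_map_map hX.aemeasurable hY.aemeasurable).1 hindep,
      Measure.map_map measurable_add (hX.prodMk hY)]
    rfl
  -- Step A/B : law of the convex combination of the Z's
  have hvec : Measure.map (fun ω i => Z i ω) (ℙ : Measure Ω') = Measure.pi (fun _ => μ) :=
    aux_vector_law μ Z hZm hZlaw hZind
  have hsum : Measure.map (fun ω => ∑ i, θ i * Z i ω) (ℙ : Measure Ω')
      = Measure.map S (Measure.pi fun _ : Fin n => μ) := by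
    rw [← hvec, Measure.map_map hS (measurable_pi_lambda _ hZm)]
    rfl
  -- Step D : pi μ as image of P1 × P2
  set Φ : (Fin n → ℝ) × (Fin n → ℝ) → (Fin n → ℝ) := fun q i => q.1 i + q.2 i with hΦdef
  have hΦ : Measurable Φ :=
    measurable_pi_lambda _ fun i =>
      ((measurable_pi_apply i).comp measurable_fst).add
        ((measurable_pi_apply i).comp measurable_snd)
  have hD : Measure.pi (fun _ : Fin n => μ) = Measure.map Φ (P1.prod P2) := by
    have h2 : MeasurePreserving (fun q : Fin n → ℝ × ℝ => fun i => (q i).1 + (q i).2)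
        (Measure.pi (fun _ : Fin n => νX.prod νY)) (Measure.pi fun _ : Fin n => μ) := by
      have hadd : MeasurePreserving (fun p : ℝ × ℝ => p.1 + p.2) (νX.prod νY) μ :=
        ⟨measurable_add, hC.symm⟩
      exact measurePreserving_pi _ _ (fun _ => hadd)
    have h1 : Measure.pi (fun _ : Fin n => νX.prod νY)
        = Measure.map (MeasurableEquiv.arrowProdEquivProdArrow ℝ ℝ (Fin n)).symm
            (P1.prod P2) :=
      ((measurePreserving_arrowProdEquivProdArrow ℝ ℝ (Fin n)
        (fun _ => νX) (fun _ => νY)).symm _).map_eq.symm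
    rw [← h2.map_eq, h1,
      Measure.map_map h2.measurable (MeasurableEquiv.arrowProdEquivProdArrow ℝ ℝ (Fin n)).symm.measurable]
    rfl
  -- canonical D⁻ bounds
  have hXc : ∀ s : ℝ, P1 (S ⁻¹' Set.Iic s) ≤ νX (Set.Iic s) := by
    intro s
    have := @hXD n θ hθ0 hθ1 (Fin n → ℝ) ⟨P1⟩ (by infer_instance)
      (fun i v => v i) (fun i => measurable_pi_apply i)
      (fun i => aux_eval_law νX i) (aux_eval_iIndep νX) s
    rwa [Measure.map_apply hS measurableSet_Iic] at this
  have hYc : ∀ s : ℝ, P2 (S ⁻¹' Set.Iic s) ≤ νY (Set.Iic s) := by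
    intro s
    have := @hYD n θ hθ0 hθ1 (Fin n → ℝ) ⟨P2⟩ (by infer_instance)
      (fun i v => v i) (fun i => measurable_pi_apply i)
      (fun i => aux_eval_law νY i) (aux_eval_iIndep νY) s
    rwa [Measure.map_apply hS measurableSet_Iic] at this
  -- the big product set
  set E : Set ((Fin n → ℝ) × (Fin n → ℝ)) := {q | S q.1 + S q.2 ≤ t} with hEdef
  have hE : MeasurableSet E :=
    measurableSet_le ((hS.comp measurable_fst).add (hS.comp measurable_snd)) measurable_const
  set F : Set (ℝ × (Fin n → ℝ)) := {p | p.1 + S p.2 ≤ t} with hFdef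
  have hF : MeasurableSet F :=
    measurableSet_le (measurable_fst.add (hS.comp measurable_snd)) measurable_const
  set G : Set (ℝ × ℝ) := {p | p.1 + p.2 ≤ t} with hGdef
  have hG : MeasurableSet G :=
    measurableSet_le (measurable_fst.add measurable_snd) measurable_const
  calc Measure.map (fun ω => ∑ i, θ i * Z i ω) (ℙ : Measure Ω') (Set.Iic t)
      = (P1.prod P2) E := by
        rw [hsum, Measure.map_apply hS measurableSet_Iic, hD,
          Measure.map_apply hΦ (hS measurableSet_Iic)]
        congr 1
        ext q
        simp only [Set.mem_preimage, Set.mem_Iic, hEdef, Set.mem_setOf_eq, hSdef, hΦdef,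
          mul_add, Finset.sum_add_distrib]
    _ = ∫⁻ b, P1 (S ⁻¹' Set.Iic (t - S b)) ∂P2 := by
        rw [Measure.prod_apply_symm hE]
        congr 1; funext b; congr 1
        ext a
        simp only [Set.mem_preimage, hEdef, Set.mem_setOf_eq, Set.mem_Iic]
        exact ⟨fun h => le_sub_iff_add_le.mpr h, fun h => le_sub_iff_add_le.mp h⟩
    _ ≤ ∫⁻ b, νX (Set.Iic (t - S b)) ∂P2 := lintegral_mono fun b => hXc _
    _ = (νX.prod P2) F := by
        rw [Measure.prod_apply_symm hF]
        congr 1; funext b; congr 1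
        ext x
        simp only [Set.mem_preimage, hFdef, Set.mem_setOf_eq, Set.mem_Iic]
        exact ⟨fun h => le_sub_iff_add_le.mp h, fun h => le_sub_iff_add_le.mpr h⟩
    _ = ∫⁻ x, P2 (S ⁻¹' Set.Iic (t - x)) ∂νX := by
        rw [Measure.prod_apply hF]
        congr 1; funext x; congr 1
        ext b
        simp only [Set.mem_preimage, hFdef, Set.mem_setOf_eq, Set.mem_Iic]
        exact ⟨fun h => le_sub_iff_add_le'.mpr h, fun h => le_sub_iff_add_le'.mp h⟩
    _ ≤ ∫⁻ x, νY (Set.Iic (t - x)) ∂νX := lintegral_mono fun x => hYc _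
    _ = (νX.prod νY) G := by
        rw [Measure.prod_apply hG]
        congr 1; funext x; congr 1
        ext y
        simp only [hGdef, Set.mem_setOf_eq, Set.mem_Iic]
        exact ⟨fun h => le_sub_iff_add_le'.mp h, fun h => le_sub_iff_add_le'.mpr h⟩
    _ = μ (Set.Iic t) := by
        rw [hC, Measure.map_apply measurable_add measurableSet_Iic]
        rfl
end

section
/- For every 0 < α ≤ 1, the Fréchet distribution with shape parameter α, i.e. the distribution on ℝ with cumulative distribution function F(x) = exp(−x^{−α}) for x > 0 and F(x) = 0 for x ≤ 0, belongs to the class D⁻. -/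
open MeasureTheory ProbabilityTheory

/-- For every `0 < α ≤ 1`, the Fréchet distribution with shape `α`, i.e. the distribution
on `ℝ` with cdf `F x = exp (-x ^ (-α))` for `x > 0` and `F x = 0` for `x ≤ 0`, belongs to
the class `D⁻`. -/
theorem stmt11 (α : ℝ) (hα0 : 0 < α) (hα1 : α ≤ 1)
    (μ : Measure ℝ) [IsProbabilityMeasure μ]
    (hcdf : ∀ t : ℝ, μ (Set.Iic t) =
      ENNReal.ofReal (if 0 < t then Real.exp (-(t ^ (-α))) else 0)) :
    IsDNeg μ := by
  intro n θ hθ hsum Ω _ hP X hXm hXd hind t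
  have hf : Measurable fun ω => ∑ i, θ i * X i ω :=
    Finset.measurable_sum _ fun i _ => (hXm i).const_mul (θ i)
  rw [Measure.map_apply hf measurableSet_Iic]
  -- almost sure positivity of each `X i`
  have hpos : ∀ᵐ ω ∂(ℙ : Measure Ω), ∀ i, 0 < X i ω := by
    rw [MeasureTheory.ae_all_iff]
    intro i
    have h0 : (ℙ : Measure Ω) (X i ⁻¹' Set.Iic 0) = 0 := by
      rw [← Measure.map_apply (hXm i) measurableSet_Iic, hXd i, hcdf 0]
      simp
    rw [ae_iff]
    simpa [Set.preimage, Set.Iic, not_lt] using h0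
  -- weights are at most one
  have hθ1 : ∀ i, θ i ≤ 1 := by
    intro i
    rw [← hsum]
    exact Finset.single_le_sum (fun j _ => hθ j) (Finset.mem_univ i)
  by_cases ht : 0 < t
  · -- sets for the independence factorization
    set s : Fin n → Set ℝ := fun i => if θ i = 0 then Set.univ else Set.Iic (t / θ i) with hs
    have hmeas : ∀ i, MeasurableSet (s i) := by
      intro i; by_cases h : θ i = 0 <;> simp [hs, h, measurableSet_Iic]
    -- a.e. inclusion into the intersection
    have hsub : (ℙ : Measure Ω) {ω | ∑ i, θ i * X i ω ≤ t} ≤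
        (ℙ : Measure Ω) (⋂ i, X i ⁻¹' s i) := by
      refine measure_mono_ae ?_
      filter_upwards [hpos] with ω hω hmem
      have hmem' : ∑ j, θ j * X j ω ≤ t := hmem
      refine Set.mem_iInter.mpr fun i => ?_
      by_cases h : θ i = 0
      · simp [hs, h]
      · have hθi : 0 < θ i := lt_of_le_of_ne (hθ i) (Ne.symm h)
        have hle : θ i * X i ω ≤ ∑ j, θ j * X j ω :=
          Finset.single_le_sum (fun j _ => mul_nonneg (hθ j) (hω j).le) (Finset.mem_univ i)
        have : θ i * X i ω ≤ t := hle.trans hmem'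
        simp only [hs, h, if_false, Set.mem_preimage, Set.mem_Iic]
        rw [le_div_iff₀ hθi]
        linarith [this]
    refine le_trans hsub ?_
    -- independence factorization
    have hfact := hind.measure_inter_preimage_eq_mul (S := Finset.univ) (sets := s)
      (fun i _ => hmeas i)
    have hIeq : (⋂ i ∈ Finset.univ, X i ⁻¹' s i) = ⋂ i, X i ⁻¹' s i := by simp
    rw [hIeq] at hfact
    rw [hfact]
    -- compute each factor
    have hfactor : ∀ i, (ℙ : Measure Ω) (X i ⁻¹' s i) =
        ENNReal.ofReal (Real.exp (-(θ i ^ α * t ^ (-α)))) := by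
      intro i
      rw [← Measure.map_apply (hXm i) (hmeas i), hXd i]
      by_cases h : θ i = 0
      · have : μ (s i) = 1 := by simp [hs, h]
        rw [this, h, Real.zero_rpow hα0.ne', zero_mul, neg_zero, Real.exp_zero,
          ENNReal.ofReal_one]
      · have hθi : 0 < θ i := lt_of_le_of_ne (hθ i) (Ne.symm h)
        have htd : 0 < t / θ i := div_pos ht hθi
        have : μ (s i) = ENNReal.ofReal (Real.exp (-((t / θ i) ^ (-α)))) := by
          simp only [hs, h, if_false]
          rw [hcdf (t / θ i), if_pos htd]
        rw [this]
        congr 2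
        rw [Real.div_rpow ht.le (hθ i), Real.rpow_neg (hθ i)]
        field_simp
    simp only [hfactor]
    rw [← ENNReal.ofReal_prod_of_nonneg (fun i _ => (Real.exp_pos _).le),
      ← Real.exp_sum]
    rw [hcdf t, if_pos ht]
    apply ENNReal.ofReal_le_ofReal
    apply Real.exp_le_exp.mpr
    have hts : 0 < t ^ (-α) := Real.rpow_pos_of_pos ht _
    have hge : (1 : ℝ) ≤ ∑ i, θ i ^ α := by
      rw [← hsum]
      refine Finset.sum_le_sum fun i _ => ?_
      by_cases h : θ i = 0
      · simp [h, Real.zero_rpow hα0.ne']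
      · have hθi : 0 < θ i := lt_of_le_of_ne (hθ i) (Ne.symm h)
        calc θ i = θ i ^ (1 : ℝ) := (Real.rpow_one _).symm
          _ ≤ θ i ^ α := Real.rpow_le_rpow_of_exponent_ge hθi (hθ1 i) hα1
    have : ∑ i, -(θ i ^ α * t ^ (-α)) = -((∑ i, θ i ^ α) * t ^ (-α)) := by
      rw [Finset.sum_neg_distrib, ← Finset.sum_mul]
    rw [this]
    have : t ^ (-α) ≤ (∑ i, θ i ^ α) * t ^ (-α) := by
      nlinarith
    linarith
  · -- t ≤ 0 : the sum is a.s. positive, so the event is null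
    have hj : ∃ j, 0 < θ j := by
      by_contra h
      push_neg at h
      have : ∑ i, θ i ≤ 0 := Finset.sum_nonpos fun i _ => h i
      rw [hsum] at this; linarith
    obtain ⟨j, hj⟩ := hj
    have hnull : (ℙ : Measure Ω) ((fun ω => ∑ i, θ i * X i ω) ⁻¹' Set.Iic t) = 0 := by
      have h0 : (ℙ : Measure Ω) {ω | ¬ ∀ i, 0 < X i ω} = 0 := ae_iff.mp hpos
      refine measure_mono_null ?_ h0
      intro ω hω
      have hω' : ∑ i, θ i * X i ω ≤ t := hω
      simp only [Set.mem_setOf_eq]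
      intro hall
      have hsumpos : 0 < ∑ i, θ i * X i ω :=
        Finset.sum_pos' (fun i _ => mul_nonneg (hθ i) (hall i).le)
          ⟨j, Finset.mem_univ j, mul_pos hj (hall j)⟩
      push_neg at ht
      linarith
    rw [hnull]
    exact zero_le
end
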